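/- arXiv:2406.15201 — 4 statements merged into one kernel-verified Lean document; each statement's English description precedes it below -/
import Mathlib

section
/- For every real number w and every real number x, one has exp(i·w·sin(x)) = ∑_{k ∈ ℤ} J_k(w)·exp(i·k·x), where the series converges (as a Fourier series of the left-hand side, with absolute convergence of the series of coefficients times e^{ikx} for each x). -/
open MeasureTheory Filter Set
open scoped Topology

/-- Bessel function of the first kind of integer order `n`, defined via the integral
`J_n(x) = (1/(2π)) ∫_{-π}^{π} exp(i(x sin u − n u)) du` (whose value is real). -/
noncomputable def besselJ (n : ℤ) (x : ℝ) : ℝ :=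
  ((2 * Real.pi : ℂ)⁻¹ *
    ∫ u in (-Real.pi)..Real.pi,
      Complex.exp (Complex.I * ((x : ℂ) * (Real.sin u : ℂ) - (n : ℂ) * (u : ℂ)))).re

/-!
The function `u ↦ exp (i w sin u)` is smooth and `2π`-periodic, and `J_k(w)` is its `k`-th
Fourier coefficient on `[-π, π]`: the defining integral is already real, since complex conjugation
of the integrand amounts to the substitution `u ↦ -u`. Integrating by parts twice, which produces
no boundary terms for a periodic function, bounds the `k`-th coefficient of a periodic `C²`
function by `C / k²`; so the coefficients are absolutely summable and the Fourier series converges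
to the function at every point.
-/

open Complex intervalIntegral Function
open scoped Interval Real ComplexConjugate

theorem Function.Periodic.deriv {𝕜 F : Type*} [NontriviallyNormedField 𝕜] [NormedAddCommGroup F]
    [NormedSpace 𝕜 F] {f : 𝕜 → F} {c : 𝕜} (hf : Periodic f c) : Periodic (deriv f) c := fun x => by
  rw [← deriv_comp_add_const, hf.funext]

section FourierCoeffOn

variable {a b : ℝ} (hab : a < b)

theorem fourierCoeffOn_of_hasDerivAt_of_eq {f f' : ℝ → ℂ} {n : ℤ} (hn : n ≠ 0)
    (hf : ∀ x ∈ [[a, b]], HasDerivAt f (f' x) x) (hf' : IntervalIntegrable f' volume a b)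
    (hfab : f b = f a) :
    fourierCoeffOn hab f n = (b - a) / (2 * π * I * n) * fourierCoeffOn hab f' n := by
  have : (n : ℂ) ≠ 0 := Int.cast_ne_zero.mpr hn
  rw [fourierCoeffOn_of_hasDerivAt hab hn hf hf', hfab, sub_self, mul_zero, zero_sub]
  field_simp

theorem norm_fourierCoeffOn_le {E : Type*} [NormedAddCommGroup E] [NormedSpace ℂ E] {f : ℝ → E}
    {M : ℝ} (hM : ∀ x ∈ Ι a b, ‖f x‖ ≤ M) (n : ℤ) :
    ‖fourierCoeffOn hab f n‖ ≤ M := by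
  have hba : 0 < b - a := sub_pos.2 hab
  have hint : ‖∫ x in a..b, fourier (-n) (x : AddCircle (b - a)) • f x‖ ≤ M * |b - a| :=
    norm_integral_le_of_norm_le_const fun x hx => by
      simpa only [norm_smul, fourier_apply, Circle.norm_coe, one_mul] using hM x hx
  rw [abs_of_pos hba] at hint
  rw [fourierCoeffOn_eq_integral, norm_smul, Real.norm_of_nonneg (by positivity)]
  calc 1 / (b - a) * _ ≤ 1 / (b - a) * (M * (b - a)) := by gcongr
    _ = M := by field_simp

theorem norm_fourierCoeffOn_le_of_contDiff {f : ℝ → ℂ} (hf : ContDiff ℝ 2 f) (hfab : f b = f a)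
    (hf'ab : deriv f b = deriv f a) {M : ℝ} (hM : ∀ x ∈ Ι a b, ‖deriv (deriv f) x‖ ≤ M)
    {n : ℤ} (hn : n ≠ 0) :
    ‖fourierCoeffOn hab f n‖ ≤ ((b - a) / (2 * π)) ^ 2 * M / n ^ 2 := by
  have hf' : ContDiff ℝ 1 (deriv f) := hf.iterate_deriv' 1 1
  rw [fourierCoeffOn_of_hasDerivAt_of_eq hab hn
      (fun x _ => (hf.differentiable two_ne_zero x).hasDerivAt)
      (hf'.continuous.intervalIntegrable _ _) hfab,
    fourierCoeffOn_of_hasDerivAt_of_eq hab hn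
      (fun x _ => (hf'.differentiable one_ne_zero x).hasDerivAt)
      ((hf'.continuous_deriv le_rfl).intervalIntegrable _ _) hf'ab,
    ← mul_assoc, norm_mul]
  have hscalar : ‖(b - a : ℂ) / (2 * π * I * n) * ((b - a) / (2 * π * I * n))‖
      = ((b - a) / (2 * π)) ^ 2 / n ^ 2 := by
    rw [← ofReal_sub, ← sq, norm_pow, norm_div, norm_mul, norm_mul, norm_mul, norm_real, norm_real,
      norm_I, norm_intCast, Real.norm_of_nonneg (sub_pos.2 hab).le,
      Real.norm_of_nonneg Real.pi_pos.le, Complex.norm_two, mul_one, div_pow, mul_pow, sq_abs,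
      div_pow, div_div]
  rw [hscalar, div_mul_eq_mul_div]
  gcongr
  exact norm_fourierCoeffOn_le hab hM n

theorem summable_norm_fourierCoeffOn_of_periodic_of_contDiff {f : ℝ → ℂ}
    (hper : Periodic f (b - a)) (hf : ContDiff ℝ 2 f) :
    Summable fun n => ‖fourierCoeffOn hab f n‖ := by
  have hf'' : Continuous (deriv (deriv f)) := (hf.iterate_deriv' 1 1).continuous_deriv le_rfl
  obtain ⟨M, hM⟩ := isCompact_uIcc.exists_bound_of_continuousOn (hf''.continuousOn (s := [[a, b]]))
  refine Summable.of_norm_bounded_eventually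
    ((Real.summable_one_div_int_pow.mpr one_lt_two).mul_left (((b - a) / (2 * π)) ^ 2 * M)) ?_
  filter_upwards [eventually_cofinite_ne 0] with n hn
  rw [norm_norm, mul_one_div]
  exact norm_fourierCoeffOn_le_of_contDiff hab hf (by simpa using hper a)
    (by simpa using hper.deriv a) (fun x hx => hM x (uIoc_subset_uIcc hx)) hn

theorem hasSum_fourier_series_of_periodic_of_contDiff {f : ℝ → ℂ} (hper : Periodic f (b - a))
    (hf : ContDiff ℝ 2 f) (x : ℝ) :
    HasSum (fun n => fourierCoeffOn hab f n • fourier n (x : AddCircle (b - a))) (f x) := by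
  have : Fact (0 < b - a) := ⟨sub_pos.2 hab⟩
  let F : C(AddCircle (b - a), ℂ) := ⟨hper.lift, continuous_coinduced_dom.mpr hf.continuous⟩
  have hcoeff : fourierCoeff F = fourierCoeffOn hab f := by
    ext n
    rw [fourierCoeff_eq_intervalIntegral _ n a, fourierCoeffOn_eq_integral, add_sub_cancel]
    simp only [F, ContinuousMap.coe_mk, Periodic.lift_coe]
  have hsum : Summable (fourierCoeff F) := by
    rw [hcoeff]
    exact (summable_norm_fourierCoeffOn_of_periodic_of_contDiff hab hper hf).of_norm
  have hF := has_pointwise_sum_fourier_series_of_summable hsum x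
  rwa [hcoeff] at hF

end FourierCoeffOn

theorem Real.neg_pi_lt_pi : -π < π := by linarith [Real.pi_pos]

theorem ofReal_besselJ (n : ℤ) (x : ℝ) :
    (besselJ n x : ℂ) = (2 * π : ℂ)⁻¹ * ∫ u in -π..π, exp (I * (x * Real.sin u - n * u)) := by
  have hconj (u : ℝ) :
      conj (exp (I * (x * Real.sin u - n * u))) = exp (I * (x * Real.sin (-u) - n * ↑(-u))) := by
    rw [← exp_conj]
    simp only [map_mul, map_sub, conj_I, conj_ofReal, map_intCast, Real.sin_neg, ofReal_neg]
    ring_nf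
  have hreal : conj (∫ u in -π..π, exp (I * (x * Real.sin u - n * u)))
      = ∫ u in -π..π, exp (I * (x * Real.sin u - n * u)) := by
    have hle : -π ≤ π := by linarith [Real.pi_pos]
    conv_lhs => rw [integral_of_le hle, ← integral_conj, ← integral_of_le hle]
    simp_rw [hconj]
    rw [integral_comp_neg (fun u : ℝ => exp (I * (x * Real.sin u - n * u))), neg_neg]
  rw [besselJ, ← conj_eq_iff_re, map_mul, hreal, map_inv₀, map_mul, conj_ofReal, map_ofNat]

theorem fourier_coe_apply_neg_pi_pi (n : ℤ) (x : ℝ) :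
    fourier n (x : AddCircle (π - -π)) = exp (I * n * x) := by
  rw [fourier_coe_apply]
  congr 1
  push_cast
  field_simp
  ring

theorem fourierCoeffOn_exp_mul_sin_eq_besselJ (w : ℝ) (n : ℤ) :
    fourierCoeffOn Real.neg_pi_lt_pi (fun u : ℝ => exp (I * w * Real.sin u)) n = besselJ n w := by
  rw [ofReal_besselJ, fourierCoeffOn_eq_integral, real_smul]
  congr 1
  · push_cast
    ring
  · refine intervalIntegral.integral_congr fun u _ => ?_
    rw [smul_eq_mul, fourier_coe_apply_neg_pi_pi, ← exp_add]
    congr 1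
    push_cast
    ring

/-- For every real `w` and `x`, `exp(i w sin x) = ∑_{k ∈ ℤ} J_k(w) e^{i k x}`, the series
converging absolutely. -/
theorem besselJ_fourier_series (w x : ℝ) :
    Summable (fun k : ℤ => ‖(besselJ k w : ℂ) * Complex.exp (Complex.I * (k : ℂ) * (x : ℂ))‖) ∧
    HasSum (fun k : ℤ => (besselJ k w : ℂ) * Complex.exp (Complex.I * (k : ℂ) * (x : ℂ)))
      (Complex.exp (Complex.I * (w : ℂ) * (Real.sin x : ℂ))) := by
  have hper : Periodic (fun u : ℝ => exp (I * w * Real.sin u)) (π - -π) := fun u => by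
    simp only [sub_neg_eq_add, ← two_mul, Real.sin_add_two_pi]
  have hf : ContDiff ℝ 2 (fun u : ℝ => exp (I * w * Real.sin u)) :=
    (contDiff_const.mul (ofRealCLM.contDiff.comp Real.contDiff_sin)).cexp
  have hterm (k : ℤ) : (besselJ k w : ℂ) * exp (I * k * x) =
      fourierCoeffOn Real.neg_pi_lt_pi (fun u : ℝ => exp (I * w * Real.sin u)) k •
        fourier k (x : AddCircle (π - -π)) := by
    rw [fourierCoeffOn_exp_mul_sin_eq_besselJ, fourier_coe_apply_neg_pi_pi, smul_eq_mul]
  simp_rw [hterm]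
  constructor
  · simpa only [norm_smul, fourier_apply, Circle.norm_coe, mul_one] using
      summable_norm_fourierCoeffOn_of_periodic_of_contDiff Real.neg_pi_lt_pi hper hf
  · exact hasSum_fourier_series_of_periodic_of_contDiff Real.neg_pi_lt_pi hper hf x
end

section
/- Let (a,b) ⊆ ℝ be an interval (possibly unbounded) and let f : (a,b) → ℝ be Lebesgue integrable on (a,b). Then lim_{n → ∞} ∫_a^b exp(i·f(u)·sin(n·u)) du = ∫_a^b J₀(f(u)) du. -/
/-! Fix the frequency `ν` and let `A(s) = ∫_S exp(i f(u) sin(νu + s)) du`. By Fubini and the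
`2π`-periodicity of `sin`, the mean of `A` over `[0, 2π]` is `∫_S J₀(f)`. On the other hand
`A(s)` is `A(0)` computed for the pair `(1_S, 1_S f)` translated by `s/ν`, so continuity of
translation in `L¹` makes `A(0) - A(s)` uniformly small on `[0, 2π]` once `ν` is large.

If `S` has infinite length, neither side is integrable (`|exp(i·)| = 1` and
`|J₀(x)| + |x| ≥ 1`), so both integrals are the junk value `0`. -/

open MeasureTheory Filter Set
open scoped Topology

open Complex
open scoped Real ENNReal ComplexConjugate Interval

theorem norm_exp_I_mul_sub_exp_I_mul_le (a b : ℝ) :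
    ‖exp (I * a) - exp (I * b)‖ ≤ |a - b| := by
  have : exp (I * a) - exp (I * b) = exp (I * b) * (exp (I * (a - b : ℝ)) - 1) := by
    push_cast; rw [mul_sub, ← exp_add]; ring_nf
  rw [this, norm_mul, norm_exp_I_mul_ofReal, one_mul]
  exact Real.norm_exp_I_mul_ofReal_sub_one_le

theorem norm_exp_I_mul_ofReal_mul_ofReal (a t : ℝ) : ‖exp (I * a * t)‖ = 1 := by
  simp [norm_exp]

theorem norm_smul_exp_sub_smul_exp_le {c₁ c₂ a b t : ℝ} (hc₂ : |c₂| ≤ 1)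
    (ht : |t| ≤ 1) :
    ‖c₁ • exp (I * a * t) - c₂ • exp (I * b * t)‖ ≤ |c₁ - c₂| + |a - b| := by
  have hexp : ∀ x : ℝ, exp (I * x * t) = exp (I * (x * t : ℝ)) := fun x => by
    push_cast; ring_nf
  have hdiff := norm_exp_I_mul_sub_exp_I_mul_le (a * t) (b * t)
  rw [← sub_mul, abs_mul] at hdiff
  calc ‖c₁ • exp (I * a * t) - c₂ • exp (I * b * t)‖
      = ‖(c₁ - c₂) • exp (I * a * t) + c₂ • (exp (I * a * t) - exp (I * b * t))‖ := by
        rw [sub_smul, smul_sub]; abel_nf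
    _ ≤ |c₁ - c₂| + |c₂| * (|a - b| * |t|) := by
        refine (norm_add_le _ _).trans (add_le_add ?_ ?_)
        · rw [norm_smul, hexp, norm_exp_I_mul_ofReal, mul_one, Real.norm_eq_abs]
        · rw [norm_smul, Real.norm_eq_abs, hexp, hexp]; gcongr
    _ ≤ |c₁ - c₂| + 1 * (|a - b| * 1) := by gcongr
    _ = |c₁ - c₂| + |a - b| := by ring

theorem tendsto_integral_norm_comp_add_sub {G E : Type*} [AddGroup G] [TopologicalSpace G]
    [IsTopologicalAddGroup G] [MeasurableSpace G] [BorelSpace G] {μ : Measure G}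
    [μ.IsAddLeftInvariant] [IsLocallyFiniteMeasure μ] [μ.InnerRegularCompactLTTop]
    [NormedAddCommGroup E] {g : G → E} (hg : Integrable g μ) :
    Tendsto (fun d => ∫ v, ‖g (d + v) - g v‖ ∂μ) (𝓝 0) (𝓝 0) := by
  have : Fact ((1 : ℝ≥0∞) ≠ ∞) := ⟨ENNReal.one_ne_top⟩
  set F := hg.toL1 g
  have hcont : Continuous fun d : G => DomAddAct.mk d +ᵥ F :=
    DomAddAct.continuous_mk.vadd continuous_const
  have hdist : ∀ d : G, dist (DomAddAct.mk d +ᵥ F) F = ∫ v, ‖g (d + v) - g v‖ ∂μ := by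
    intro d
    rw [dist_eq_norm, L1.norm_eq_integral_norm]
    refine integral_congr_ae ?_
    filter_upwards [Lp.coeFn_sub (DomAddAct.mk d +ᵥ F) F,
      DomAddAct.vadd_Lp_ae_eq (DomAddAct.mk d) F, hg.coeFn_toL1,
      (measurePreserving_add_left μ d).quasiMeasurePreserving.ae_eq_comp hg.coeFn_toL1]
      with v hsub hvadd hF hFd
    rw [hsub, Pi.sub_apply, hvadd, hF]
    exact congrArg (‖· - g v‖) hFd
  simpa [hdist] using (hcont.tendsto 0).dist (tendsto_const_nhds (x := F))

theorem norm_sub_le_of_intervalIntegral_eq_smul {E : Type*} [NormedAddCommGroup E]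
    [NormedSpace ℝ E] [CompleteSpace E] {A : ℝ → E} {F T : E} {L C : ℝ} (hL : 0 < L)
    (hA : IntervalIntegrable A volume 0 L)
    (hAT : ∫ s in (0 : ℝ)..L, A s = L • T) (hC : ∀ s ∈ Ioc 0 L, ‖F - A s‖ ≤ C) :
    ‖F - T‖ ≤ C := by
  have hFT : L • (F - T) = ∫ s in (0 : ℝ)..L, (F - A s) := by
    rw [intervalIntegral.integral_sub intervalIntegrable_const hA, hAT,
      intervalIntegral.integral_const, sub_zero, smul_sub]
  have h := intervalIntegral.norm_integral_le_of_norm_le_const (a := 0) (b := L)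
    fun s hs => hC s (by rwa [uIoc_of_le hL.le] at hs)
  rw [← hFT, norm_smul, Real.norm_eq_abs, sub_zero, abs_of_pos hL, mul_comm] at h
  exact le_of_mul_le_mul_right h hL

theorem measure_univ_lt_top_of_integrable_of_one_le_norm {α E : Type*} [MeasurableSpace α]
    [NormedAddCommGroup E] {μ : Measure α} {g : α → E} (hg : Integrable g μ)
    (hg₁ : ∀ x, 1 ≤ ‖g x‖) : μ univ < ∞ := by
  simpa [hg₁] using hg.measure_norm_ge_lt_top one_pos

theorem conj_integral_exp_I_mul_sin (x : ℝ) :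
    conj (∫ u in -π..π, exp (I * x * Real.sin u)) =
      ∫ u in -π..π, exp (I * x * Real.sin u) := by
  have hconj : ∀ u, conj (exp (I * x * Real.sin u)) = exp (I * x * Real.sin (-u)) := fun u => by
    rw [← exp_conj, map_mul, map_mul, conj_I, conj_ofReal, conj_ofReal, Real.sin_neg, ofReal_neg]
    ring_nf
  rw [← intervalIntegral.intervalIntegral_conj]
  simp_rw [hconj]
  rw [intervalIntegral.integral_comp_neg (fun u => exp (I * x * Real.sin u)), neg_neg]

theorem ofReal_besselJ_zero (x : ℝ) :
    (besselJ 0 x : ℂ) = (2 * π : ℂ)⁻¹ * ∫ u in -π..π, exp (I * x * Real.sin u) := by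
  have hreal : conj ((2 * π : ℂ)⁻¹ * ∫ u in -π..π, exp (I * x * Real.sin u)) =
      (2 * π : ℂ)⁻¹ * ∫ u in -π..π, exp (I * x * Real.sin u) := by
    rw [map_mul, conj_integral_exp_I_mul_sin]; simp [conj_ofReal, map_ofNat]
  rw [← conj_eq_iff_re.mp hreal, besselJ]
  simp [mul_assoc]

theorem besselJ_zero_zero : besselJ 0 0 = 1 := by
  have h : (besselJ 0 0 : ℂ) = 1 := by
    rw [ofReal_besselJ_zero, ofReal_zero]
    simp only [mul_zero, zero_mul, exp_zero, intervalIntegral.integral_const, sub_neg_eq_add,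
      ← two_mul, real_smul, ofReal_mul, ofReal_ofNat, mul_one]
    exact inv_mul_cancel₀ (by simp [Real.pi_ne_zero])
  exact_mod_cast h

theorem lipschitzWith_besselJ_zero : LipschitzWith 1 (besselJ 0) := by
  refine LipschitzWith.of_dist_le_mul fun x y => ?_
  have hbound : ∀ u ∈ Ι (-π) π,
      ‖exp (I * x * Real.sin u) - exp (I * y * Real.sin u)‖ ≤ |x - y| := fun u _ => by
    simpa using norm_smul_exp_sub_smul_exp_le (c₁ := 1) (c₂ := 1) (a := x) (b := y)
      abs_one.le (Real.abs_sin_le_one u)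
  have hint : ∀ z : ℝ, IntervalIntegrable (fun u => exp (I * z * Real.sin u)) volume (-π) π :=
    fun z => (by fun_prop : Continuous _).intervalIntegrable _ _
  have h := intervalIntegral.norm_integral_le_of_norm_le_const hbound
  rw [intervalIntegral.integral_sub (hint x) (hint y)] at h
  rw [Real.dist_eq, Real.dist_eq, NNReal.coe_one, one_mul, ← Real.norm_eq_abs,
    ← Complex.norm_real, ofReal_sub, ofReal_besselJ_zero, ofReal_besselJ_zero, ← mul_sub,
    norm_mul]
  have hlen : |π - -π| = 2 * π := by rw [sub_neg_eq_add, abs_of_pos (by positivity)]; ring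
  have hnorm : ‖(2 * π : ℂ)⁻¹‖ = (2 * π)⁻¹ := by
    rw [norm_inv, norm_mul, Complex.norm_two, Complex.norm_of_nonneg Real.pi_pos.le]
  rw [hlen] at h
  rw [hnorm]
  calc (2 * π)⁻¹ * _ ≤ (2 * π)⁻¹ * (|x - y| * (2 * π)) := by gcongr
    _ = |x - y| := by field_simp

theorem abs_besselJ_zero_sub_one_le (x : ℝ) : |besselJ 0 x - 1| ≤ |x| := by
  simpa [besselJ_zero_zero, Real.dist_eq] using lipschitzWith_besselJ_zero.dist_le_mul x 0

theorem one_le_abs_besselJ_zero_add_abs (x : ℝ) : 1 ≤ |besselJ 0 x| + |x| := by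
  have h := abs_besselJ_zero_sub_one_le x
  rw [abs_sub_comm] at h
  linarith [abs_sub_abs_le_abs_sub 1 (besselJ 0 x), abs_one (α := ℝ)]

theorem integral_exp_I_mul_sin_add (x r : ℝ) :
    ∫ s in (0 : ℝ)..2 * π, exp (I * x * Real.sin (r + s)) = 2 * π * besselJ 0 x := by
  have hper : Function.Periodic (fun u : ℝ => exp (I * x * Real.sin u)) (2 * π) := fun u => by
    simp only [Real.sin_periodic u]
  rw [intervalIntegral.integral_comp_add_left (fun u => exp (I * x * Real.sin u)), add_zero,
    hper.intervalIntegral_add_eq r (-π), ofReal_besselJ_zero, show -π + 2 * π = π by ring,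
    mul_inv_cancel_left₀ (by simp [Real.pi_ne_zero])]

section PhaseIntegrals

variable {α : Type*} [MeasurableSpace α] {μ : Measure α} {f θ : α → ℝ}

theorem integrable_smul_exp_I_mul_sin {χ : α → ℝ} (hχ : Integrable χ μ)
    (hf : AEStronglyMeasurable f μ) (hθ : AEStronglyMeasurable θ μ) :
    Integrable (fun u => χ u • exp (I * f u * Real.sin (θ u))) μ := by
  refine hχ.norm.mono' (by fun_prop) (ae_of_all _ fun u => ?_)
  rw [norm_smul, norm_exp_I_mul_ofReal_mul_ofReal, mul_one]

theorem integrable_prod_exp_I_mul_sin_add [IsFiniteMeasure μ] (hf : AEStronglyMeasurable f μ)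
    (hθ : AEStronglyMeasurable θ μ) :
    Integrable (fun p : ℝ × α => exp (I * f p.2 * Real.sin (θ p.2 + p.1)))
      ((volume.restrict (Ioc 0 (2 * π))).prod μ) := by
  have : IsFiniteMeasure (volume.restrict (Ioc (0 : ℝ) (2 * π))) :=
    isFiniteMeasure_restrict.mpr measure_Ioc_lt_top.ne
  refine (integrable_const (1 : ℝ)).mono' ?_ (ae_of_all _ fun p => ?_)
  · have hcont : Continuous fun q : ℝ × ℝ => exp (I * q.1 * Real.sin q.2) := by fun_prop
    exact hcont.comp_aestronglyMeasurable
      (hf.comp_snd.prodMk (hθ.comp_snd.add measurable_fst.aestronglyMeasurable))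
  · rw [norm_exp_I_mul_ofReal_mul_ofReal]

theorem integral_integral_exp_I_mul_sin_add [IsFiniteMeasure μ] (hf : AEStronglyMeasurable f μ)
    (hθ : AEStronglyMeasurable θ μ) :
    ∫ s in (0 : ℝ)..2 * π, ∫ u, exp (I * f u * Real.sin (θ u + s)) ∂μ =
      2 * π * ∫ u, (besselJ 0 (f u) : ℂ) ∂μ := by
  rw [intervalIntegral.integral_of_le Real.two_pi_pos.le,
    integral_integral_swap (integrable_prod_exp_I_mul_sin_add hf hθ)]
  simp_rw [← intervalIntegral.integral_of_le Real.two_pi_pos.le, integral_exp_I_mul_sin_add]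
  exact integral_const_mul _ _

theorem intervalIntegrable_integral_exp_I_mul_sin_add [IsFiniteMeasure μ]
    (hf : AEStronglyMeasurable f μ) (hθ : AEStronglyMeasurable θ μ) :
    IntervalIntegrable (fun s => ∫ u, exp (I * f u * Real.sin (θ u + s)) ∂μ)
      volume 0 (2 * π) :=
  (intervalIntegrable_iff_integrableOn_Ioc_of_le Real.two_pi_pos.le).mpr
    (integrable_prod_exp_I_mul_sin_add hf hθ).integral_prod_left

theorem setIntegral_exp_I_mul_sin_eq_integral_indicator {S : Set α} (hS : MeasurableSet S) :
    ∫ u in S, exp (I * f u * Real.sin (θ u)) ∂μ =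
      ∫ u, S.indicator (1 : α → ℝ) u •
        exp (I * S.indicator f u * Real.sin (θ u)) ∂μ := by
  rw [← integral_indicator hS]
  congr 1 with u
  by_cases hu : u ∈ S <;> simp [hu]

end PhaseIntegrals

theorem norm_integral_smul_exp_I_mul_sin_sub_le {χ h : ℝ → ℝ} (hχ : Integrable χ)
    (hχ₁ : ∀ u, |χ u| ≤ 1) (hh : Integrable h) {ν : ℝ} (hν : ν ≠ 0) (s : ℝ) :
    ‖(∫ u, χ u • exp (I * h u * Real.sin (ν * u))) -
        ∫ u, χ u • exp (I * h u * Real.sin (ν * u + s))‖ ≤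
      (∫ v, |χ (s / ν + v) - χ v|) + ∫ v, |h (s / ν + v) - h v| := by
  set d := s / ν
  have hshift : ∫ u, χ u • exp (I * h u * Real.sin (ν * u)) =
      ∫ v, χ (d + v) • exp (I * h (d + v) * Real.sin (ν * v + s)) := by
    rw [← integral_add_left_eq_self (fun u => χ u • exp (I * h u * Real.sin (ν * u))) d]
    congr 1 with v
    rw [show ν * (d + v) = ν * v + s by simp only [d]; field_simp; ring]
  have hint : ∀ {c : ℝ → ℝ}, Integrable c → Integrable fun v => |c (d + v) - c v| :=
    fun hc => ((hc.comp_add_left d).sub hc).abs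
  rw [hshift, ← integral_sub, ← integral_add (hint hχ) (hint hh)]
  · refine (norm_integral_le_integral_norm _).trans (integral_mono_of_nonneg
      (ae_of_all _ fun _ => norm_nonneg _) ((hint hχ).add (hint hh)) (ae_of_all _ fun v => ?_))
    exact norm_smul_exp_sub_smul_exp_le (hχ₁ v) (Real.abs_sin_le_one _)
  · exact integrable_smul_exp_I_mul_sin (hχ.comp_add_left d)
      (hh.comp_add_left d).aestronglyMeasurable (by fun_prop)
  · exact integrable_smul_exp_I_mul_sin hχ hh.aestronglyMeasurable (by fun_prop)

theorem tendsto_setIntegral_exp_I_mul_sin {S : Set ℝ} (hS : MeasurableSet S)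
    (hSfin : volume S < ∞) {f : ℝ → ℝ} (hf : IntegrableOn f S) :
    Tendsto (fun ν : ℝ => ∫ u in S, exp (I * f u * Real.sin (ν * u))) atTop
      (𝓝 (∫ u in S, (besselJ 0 (f u) : ℂ))) := by
  have : IsFiniteMeasure (volume.restrict S) := isFiniteMeasure_restrict.mpr hSfin.ne
  set χ := S.indicator (1 : ℝ → ℝ)
  set h := S.indicator f
  have hχ : Integrable χ := (integrable_indicator_iff hS).mpr (integrableOn_const hSfin.ne)
  have hh : Integrable h := (integrable_indicator_iff hS).mpr hf
  have hχ₁ : ∀ u, |χ u| ≤ 1 := fun u => by by_cases hu : u ∈ S <;> simp [χ, hu]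
  have hω : Tendsto (fun d => (∫ v, |χ (d + v) - χ v|) + ∫ v, |h (d + v) - h v|)
      (𝓝 0) (𝓝 0) := by
    simpa using
      (tendsto_integral_norm_comp_add_sub hχ).add (tendsto_integral_norm_comp_add_sub hh)
  rw [Metric.tendsto_nhds]
  intro ε hε
  obtain ⟨δ, hδ, hωδ⟩ := Metric.tendsto_nhds_nhds.mp hω (ε / 2) (half_pos hε)
  filter_upwards [eventually_gt_atTop (2 * π / δ), eventually_gt_atTop 0] with ν hνδ hν
  have hθ : AEStronglyMeasurable (fun u : ℝ => ν * u) (volume.restrict S) := by fun_prop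
  rw [dist_eq_norm]
  refine (norm_sub_le_of_intervalIntegral_eq_smul Real.two_pi_pos
    (intervalIntegrable_integral_exp_I_mul_sin_add hf.aestronglyMeasurable hθ) ?_
    fun s hs => ?_).trans_lt (half_lt_self hε)
  · rw [integral_integral_exp_I_mul_sin_add hf.aestronglyMeasurable hθ, Complex.real_smul]
    push_cast; rfl
  · rw [setIntegral_exp_I_mul_sin_eq_integral_indicator hS,
      setIntegral_exp_I_mul_sin_eq_integral_indicator hS (θ := fun u => ν * u + s)]
    refine (norm_integral_smul_exp_I_mul_sin_sub_le hχ hχ₁ hh hν.ne' s).trans ?_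
    have hsν : dist (s / ν) 0 < δ := by
      rw [Real.dist_eq, sub_zero, abs_of_pos (div_pos hs.1 hν), div_lt_iff₀ hν]
      rw [div_lt_iff₀ hδ] at hνδ
      linarith [hs.2]
    exact (le_abs_self _).trans (by simpa [Real.dist_eq] using (hωδ hsν).le)

/-- If `f` is Lebesgue integrable on a (possibly unbounded) interval `(a,b)`, then
`∫_a^b exp(i f(u) sin(n u)) du → ∫_a^b J₀(f(u)) du` as `n → ∞`. -/
theorem tendsto_integral_exp_sin (a b : EReal) (f : ℝ → ℝ)
    (S : Set ℝ) (hS : S = {x : ℝ | a < (x : EReal) ∧ (x : EReal) < b})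
    (hf : IntegrableOn f S) :
    Tendsto
      (fun n : ℕ => ∫ u in S, Complex.exp (Complex.I * (f u : ℂ) * (Real.sin (n * u) : ℂ)))
      atTop (nhds (∫ u in S, (besselJ 0 (f u) : ℂ))) := by
  have hSm : MeasurableSet S := hS ▸ (measurable_coe_real_ereal measurableSet_Ioi).inter
    (measurable_coe_real_ereal measurableSet_Iio)
  rcases (le_top : volume S ≤ ∞).lt_or_eq with hfin | hinf
  · exact (tendsto_setIntegral_exp_I_mul_sin hSm hfin hf).comp tendsto_natCast_atTop_atTop
  have hrestrict : volume.restrict S univ = ∞ := by rw [Measure.restrict_apply_univ, hinf]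
  have hexp : ∀ n : ℕ, ∫ u in S, exp (I * f u * Real.sin (n * u)) = 0 := fun n =>
    integral_undef fun hint => (measure_univ_lt_top_of_integrable_of_one_le_norm hint
      fun u => (norm_exp_I_mul_ofReal_mul_ofReal _ _).ge).ne hrestrict
  have hJ : ∫ u in S, (besselJ 0 (f u) : ℂ) = 0 := integral_undef fun hint => by
    refine (measure_univ_lt_top_of_integrable_of_one_le_norm (hint.norm.add hf.norm)
      fun u => ?_).ne hrestrict
    simp only [Pi.add_apply, Complex.norm_real, Real.norm_eq_abs]
    exact (one_le_abs_besselJ_zero_add_abs (f u)).trans (le_abs_self _)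
  simp only [hexp, hJ]
  exact tendsto_const_nhds
end

section
/- For every t ∈ ℝ one has ∫_0^1 J₀(t·√(−2·ln u)) du = e^{−t²/2}. -/
/-!
Integrating the cosine series termwise against `∫_{-π}^{π} sin^{2k} = 2π (2k)! / (4^k (k!)²)`
gives `J₀(x) = ∑ (-x²/4)^k / (k!)²`. At `x = t √(-2 log u)` the `k`-th term is
`(-t²/2)^k / (k!)² · (-log u)^k`, and `∫₀¹ (-log u)^k du = Γ(k+1) = k!` (substitute `u = e^{-x}`),
so integrating termwise once more leaves `∑ (-t²/2)^k / k! = e^{-t²/2}`. Both interchanges are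
dominated convergence: the series of absolute values converge.
-/

open MeasureTheory Filter Set
open scoped Topology

open Real
open scoped Nat

lemma prod_range_two_mul_add_one_div_two_mul_add_two (n : ℕ) :
    ∏ i ∈ Finset.range n, (2 * (i : ℝ) + 1) / (2 * i + 2) =
      (2 * n)! / (4 ^ n * (n ! : ℝ) ^ 2) := by
  induction n with
  | zero => simp
  | succ k ih =>
    rw [Finset.prod_range_succ, ih, show 2 * (k + 1) = 2 * k + 1 + 1 by ring, Nat.factorial_succ,
      Nat.factorial_succ, Nat.factorial_succ]
    push_cast
    field_simp
    ring

lemma integral_sin_pow_even_neg_pi_pi (k : ℕ) :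
    ∫ u in -π..π, sin u ^ (2 * k) = 2 * π * ((2 * k)! / (4 ^ k * (k ! : ℝ) ^ 2)) := by
  have hint : ∀ a b : ℝ, IntervalIntegrable (fun u => sin u ^ (2 * k)) volume a b :=
    fun a b => (continuous_sin.pow _).intervalIntegrable a b
  have hsymm : ∫ u in -π..0, sin u ^ (2 * k) = ∫ u in 0..π, sin u ^ (2 * k) := by
    simpa [Even.neg_pow (even_two_mul k)] using
      (intervalIntegral.integral_comp_neg (a := 0) (b := π) fun u => sin u ^ (2 * k)).symm
  rw [← intervalIntegral.integral_add_adjacent_intervals (hint _ 0) (hint 0 _), hsymm,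
    integral_sin_pow_even, prod_range_two_mul_add_one_div_two_mul_add_two]
  ring

lemma besselJ_zero_eq_integral_cos (x : ℝ) :
    besselJ 0 x = (2 * π)⁻¹ * ∫ u in -π..π, cos (x * sin u) := by
  have hint :
      IntervalIntegrable (fun u : ℝ => Complex.exp (↑(x * sin u) * Complex.I)) volume (-π) π :=
    Continuous.intervalIntegrable (by fun_prop) _ _
  rw [besselJ, show (2 * π : ℂ)⁻¹ = ((2 * π)⁻¹ : ℝ) by push_cast; rfl,
    Complex.re_ofReal_mul]
  congr 1
  simp only [Int.cast_zero, zero_mul, sub_zero, mul_comm Complex.I, ← Complex.ofReal_mul]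
  rw [← Complex.reCLM_apply, ← Complex.reCLM.intervalIntegral_comp_comm hint]
  simp only [Complex.reCLM_apply, Complex.exp_ofReal_mul_I_re]

lemma hasSum_integral_cos_mul_sin (x : ℝ) :
    HasSum (fun k : ℕ => 2 * π * ((-(x ^ 2 / 4)) ^ k / (k ! : ℝ) ^ 2))
      (∫ u in -π..π, cos (x * sin u)) := by
  set F : ℕ → ℝ → ℝ := fun k u => (-1) ^ k * (x * sin u) ^ (2 * k) / (2 * k)!
  have hF_int (k : ℕ) : Integrable (F k) (volume.restrict (Ioc (-π) π)) :=
    (by fun_prop : Continuous (F k)).integrableOn_Ioc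
  have hF_le (k : ℕ) (u : ℝ) : ‖F k u‖ ≤ |x| ^ (2 * k) / (2 * k)! := by
    simp only [F, norm_div, norm_mul, norm_pow, norm_neg, norm_one, one_pow, one_mul,
      Real.norm_eq_abs, Nat.abs_cast]
    gcongr
    exact mul_le_of_le_one_right (abs_nonneg x) (abs_sin_le_one u)
  have hF_sum : Summable fun k => ∫ u in Ioc (-π) π, ‖F k u‖ := by
    refine .of_nonneg_of_le (fun k => integral_nonneg fun u => norm_nonneg _) (fun k => ?_)
      (((summable_pow_div_factorial |x|).comp_injective
        (mul_right_injective₀ two_ne_zero)).mul_left (2 * π))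
    calc ∫ u in Ioc (-π) π, ‖F k u‖ ≤ ∫ _ in Ioc (-π) π, |x| ^ (2 * k) / (2 * k)! :=
          integral_mono (hF_int k).norm (integrable_const _) (hF_le k)
      _ = 2 * π * (|x| ^ (2 * k) / (2 * k)!) := by
          rw [setIntegral_const, volume_real_Ioc_of_le (by linarith [pi_pos]), smul_eq_mul]
          ring
  have hF_integral (k : ℕ) :
      ∫ u in Ioc (-π) π, F k u = 2 * π * ((-(x ^ 2 / 4)) ^ k / (k ! : ℝ) ^ 2) := by
    simp only [F, ← intervalIntegral.integral_of_le (neg_le_self pi_pos.le), mul_pow,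
      mul_div_assoc,
      mul_div_right_comm _ (sin _ ^ _), intervalIntegral.integral_const_mul]
    rw [integral_sin_pow_even_neg_pi_pi, neg_pow (x ^ 2 / 4), div_pow, ← pow_mul]
    field_simp
  have hF_tsum : ∫ u in Ioc (-π) π, ∑' k, F k u = ∫ u in -π..π, cos (x * sin u) := by
    rw [intervalIntegral.integral_of_le (neg_le_self pi_pos.le)]
    exact integral_congr_ae (.of_forall fun u => (hasSum_cos _).tsum_eq)
  simpa only [hF_integral, hF_tsum] using hasSum_integral_of_summable_integral_norm hF_int hF_sum

lemma hasSum_besselJ_zero (x : ℝ) :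
    HasSum (fun k : ℕ => (-(x ^ 2 / 4)) ^ k / (k ! : ℝ) ^ 2) (besselJ 0 x) := by
  rw [besselJ_zero_eq_integral_cos]
  simpa [← mul_assoc, pi_ne_zero] using (hasSum_integral_cos_mul_sin x).mul_left (2 * π)⁻¹

lemma image_exp_neg_Ioi_zero : (fun x : ℝ => exp (-x)) '' Ioi 0 = Ioo 0 1 := by
  rw [← exp_zero, ← image_exp_Iio, show (fun x : ℝ => exp (-x)) = exp ∘ Neg.neg from rfl,
    image_comp, image_neg_Ioi, neg_zero]

lemma hasDerivWithinAt_exp_neg (x : ℝ) (s : Set ℝ) :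
    HasDerivWithinAt (fun x : ℝ => exp (-x)) (-exp (-x)) s x := by
  simpa using ((hasDerivAt_neg x).exp).hasDerivWithinAt

lemma injOn_exp_neg (s : Set ℝ) : InjOn (fun x : ℝ => exp (-x)) s :=
  fun _ _ _ _ h => neg_injective (exp_injective h)

section
variable {E : Type*} [NormedAddCommGroup E] [NormedSpace ℝ E]

lemma integrableOn_Ioo_comp_neg_log_iff (f : ℝ → E) :
    IntegrableOn (fun u => f (-log u)) (Ioo 0 1) ↔
      IntegrableOn (fun x => exp (-x) • f x) (Ioi 0) := by
  rw [← image_exp_neg_Ioi_zero,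
    integrableOn_image_iff_integrableOn_abs_deriv_smul measurableSet_Ioi
    (fun x _ => hasDerivWithinAt_exp_neg x _) (injOn_exp_neg _)]
  simp [abs_of_pos (exp_pos _)]

lemma integral_Ioo_comp_neg_log (f : ℝ → E) :
    ∫ u in Ioo 0 1, f (-log u) = ∫ x in Ioi 0, exp (-x) • f x := by
  rw [← image_exp_neg_Ioi_zero, integral_image_eq_integral_abs_deriv_smul measurableSet_Ioi
    (fun x _ => hasDerivWithinAt_exp_neg x _) (injOn_exp_neg _)]
  simp [abs_of_pos (exp_pos _)]
end

lemma integrableOn_neg_log_pow (k : ℕ) :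
    IntegrableOn (fun u : ℝ => (-log u) ^ k) (Ioo 0 1) := by
  rw [integrableOn_Ioo_comp_neg_log_iff (· ^ k)]
  simpa [rpow_natCast] using GammaIntegral_convergent (s := k + 1) (by positivity)

lemma integral_neg_log_pow (k : ℕ) : ∫ u in Ioo 0 1, (-log u) ^ k = (k ! : ℝ) := by
  rw [integral_Ioo_comp_neg_log (· ^ k), ← Gamma_nat_eq_factorial,
    Gamma_eq_integral (by positivity)]
  simp [rpow_natCast, mul_comm]

lemma hasSum_integral_tsum_mul_neg_log_pow {a : ℕ → ℝ} (ha : Summable fun k => |a k| * k !) :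
    HasSum (fun k => a k * k !) (∫ u in Ioo 0 1, ∑' k, a k * (-log u) ^ k) := by
  have hnorm (k : ℕ) : ∫ u in Ioo 0 1, ‖a k * (-log u) ^ k‖ = |a k| * k ! := by
    rw [← integral_neg_log_pow, ← integral_const_mul]
    refine setIntegral_congr_fun measurableSet_Ioo fun u hu => ?_
    rw [norm_mul, norm_pow, Real.norm_eq_abs, Real.norm_eq_abs,
      abs_of_nonneg (neg_nonneg.2 (log_nonpos hu.1.le hu.2.le))]
  have h := hasSum_integral_of_summable_integral_norm
    (fun k => (integrableOn_neg_log_pow k).const_mul (a k)) (by simpa only [hnorm] using ha)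
  simpa only [integral_const_mul, integral_neg_log_pow] using h

/-- For every real `t`, `∫_0^1 J₀(t √(−2 ln u)) du = e^{−t²/2}`. -/
theorem integral_besselJ_sqrt_log (t : ℝ) :
    (∫ u in Set.Ioo (0 : ℝ) 1, besselJ 0 (t * Real.sqrt (-2 * Real.log u)))
      = Real.exp (-t ^ 2 / 2) := by
  set a : ℕ → ℝ := fun k => (-t ^ 2 / 2) ^ k / (k ! : ℝ) ^ 2
  have hseries : ∀ u ∈ Ioo (0 : ℝ) 1,
      besselJ 0 (t * √(-2 * log u)) = ∑' k, a k * (-log u) ^ k := by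
    intro u hu
    refine ((hasSum_besselJ_zero _).tsum_eq.symm.trans (tsum_congr fun k => ?_))
    rw [mul_pow, sq_sqrt (by nlinarith [log_neg hu.1 hu.2]),
      show -(t ^ 2 * (-2 * log u) / 4) = -t ^ 2 / 2 * -log u by ring, mul_pow]
    ring
  have hexp : HasSum (fun k => a k * k !) (exp (-t ^ 2 / 2)) := by
    have hterm (k : ℕ) : a k * k ! = (-t ^ 2 / 2) ^ k / k ! := by
      simp only [a]
      field_simp
    rw [funext hterm, exp_eq_exp_ℝ]
    exact NormedSpace.expSeries_div_hasSum_exp (-t ^ 2 / 2)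
  have hsum : Summable fun k => |a k| * k ! := by
    have hterm (k : ℕ) : |a k| * k ! = (t ^ 2 / 2) ^ k / k ! := by
      simp only [a, abs_div, abs_pow, neg_div, abs_neg, Nat.abs_cast,
        abs_of_nonneg (by positivity : 0 ≤ t ^ 2 / 2)]
      field_simp
    simpa only [hterm] using summable_pow_div_factorial (t ^ 2 / 2)
  rw [setIntegral_congr_fun measurableSet_Ioo hseries]
  exact (hasSum_integral_tsum_mul_neg_log_pow hsum).unique hexp
end

section
/- Let f(u) = √(−2·ln u) for u ∈ (0,1) and let μ_n be the law of V_n = f(U)·sin(n·U), i.e. the pushforward of the uniform probability measure on (0,1) under u ↦ √(−2·ln u)·sin(n·u). Then μ_n converges weakly to the standard normal distribution N(0,1) (the probability measure on ℝ with density t ↦ (1/√(2π))·e^{−t²/2}). -/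
/-!
For bounded continuous `g`, `E g(V_n) = ∫₀¹ h(u, nu) du` with `h(u, θ) = g(√(-2 log u) sin θ)`,
which is `2π`-periodic in `θ`. As `n → ∞` this tends to `∫₀¹ ⨍_{[0,2π]} h(u, θ) dθ du`: on a short
interval `u` is almost constant, and the integral of a periodic function along `θ = n u` tends to
its mean; the singularity at `u = 0` costs only a small tail since `g` is bounded. The limit is
the Box–Muller representation of the standard normal law: the substitution `u = exp(-r²/2)` turns
it into `∫_{r>0} r e^{-r²/2} ⨍ g(r sin θ) dθ dr`, the integral of `g(y)` against the standard
Gaussian density on `ℝ²` in polar coordinates.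
-/

open MeasureTheory Filter Set
open scoped Topology

/-- The uniform probability measure on `(0,1)`. -/
noncomputable def uniform01 : Measure ℝ := volume.restrict (Set.Ioo (0 : ℝ) 1)

open intervalIntegral Real Function ProbabilityTheory
open scoped BoundedContinuousFunction

theorem tendsto_of_forall_approx {ι α : Type*} [PseudoMetricSpace α] {l : Filter ι} {I : ι → α}
    {L : α} (h : ∀ ε > 0, ∃ (s : ι → α) (S : α), Tendsto s l (𝓝 S) ∧
      (∀ᶠ i in l, dist (I i) (s i) ≤ ε) ∧ dist S L ≤ ε) :
    Tendsto I l (𝓝 L) := by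
  refine Metric.tendsto_nhds.2 fun ε hε => ?_
  obtain ⟨s, S, hs, hIs, hSL⟩ := h (ε / 3) (by positivity)
  filter_upwards [hIs, Metric.tendsto_nhds.1 hs (ε / 3) (by positivity)] with i hIi hsi
  calc dist (I i) L ≤ dist (I i) (s i) + dist (s i) S + dist S L := dist_triangle4 _ _ _ _
    _ < ε := by linarith

theorem abs_intervalIntegral_sub_sum_le {f : ℝ → ℝ} {G : ℕ → ℝ → ℝ} {u : ℕ → ℝ} {N : ℕ}
    {ε : ℝ} (hu : Monotone u)
    (hf : ∀ j < N, IntervalIntegrable f volume (u j) (u (j + 1)))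
    (hG : ∀ j < N, IntervalIntegrable (G j) volume (u j) (u (j + 1)))
    (hfG : ∀ j < N, ∀ x ∈ Ioc (u j) (u (j + 1)), |f x - G j x| ≤ ε) :
    |(∫ x in u 0..u N, f x) - ∑ j ∈ Finset.range N, ∫ x in u j..u (j + 1), G j x|
      ≤ ε * (u N - u 0) := by
  rw [← sum_integral_adjacent_intervals hf, ← Finset.sum_sub_distrib, ← Finset.sum_range_sub,
    Finset.mul_sum]
  refine (Finset.abs_sum_le_sum_abs _ _).trans (Finset.sum_le_sum fun j hj => ?_)
  have hj : j < N := Finset.mem_range.1 hj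
  have hle : u j ≤ u (j + 1) := hu j.le_succ
  rw [← integral_sub (hf j hj) (hG j hj), ← abs_of_nonneg (sub_nonneg.2 hle)]
  exact intervalIntegral.norm_integral_le_of_norm_le_const (f := fun x => f x - G j x)
    fun x hx => hfG j hj x (uIoc_of_le hle ▸ hx)

theorem abs_intervalAverage_sub_le {f g : ℝ → ℝ} {a b ε : ℝ} (hab : a < b)
    (hf : IntervalIntegrable f volume a b) (hg : IntervalIntegrable g volume a b)
    (hfg : ∀ x ∈ Ioc a b, |f x - g x| ≤ ε) :
    |(⨍ x in a..b, f x) - ⨍ x in a..b, g x| ≤ ε := by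
  have hba : 0 < b - a := sub_pos.2 hab
  rw [interval_average_eq, interval_average_eq, ← smul_sub, ← integral_sub hf hg, smul_eq_mul,
    abs_mul, abs_inv, abs_of_pos hba, inv_mul_le_iff₀ hba, mul_comm, ← abs_of_pos hba]
  exact intervalIntegral.norm_integral_le_of_norm_le_const (f := fun x => f x - g x)
    fun x hx => hfg x (uIoc_of_le hab.le ▸ hx)

theorem abs_intervalIntegral_sub_intervalIntegral_le {f : ℝ → ℝ} {a b c d C : ℝ}
    (hac : a ≤ c) (hcd : c ≤ d) (hdb : d ≤ b) (hf : IntervalIntegrable f volume a b)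
    (hC : ∀ x ∈ Ioo a b, |f x| ≤ C) :
    |(∫ x in a..b, f x) - ∫ x in c..d, f x| ≤ C * ((c - a) + (b - d)) := by
  have hsub : ∀ {x y}, a ≤ x → x ≤ y → y ≤ b → IntervalIntegrable f volume x y :=
    fun hx hxy hy => hf.mono_set (by
      rw [uIcc_of_le hxy, uIcc_of_le (hx.trans (hxy.trans hy))]; exact Icc_subset_Icc hx hy)
  have hbound : ∀ {x y}, a ≤ x → x ≤ y → y ≤ b → |∫ t in x..y, f t| ≤ C * (y - x) := by
    intro x y hx hxy hy
    rw [← abs_of_nonneg (sub_nonneg.2 hxy)]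
    refine norm_integral_le_of_norm_le_const_ae (f := f) ?_
    filter_upwards [Measure.ae_ne volume b] with t htb ht
    rw [uIoc_of_le hxy] at ht
    exact hC t ⟨hx.trans_lt ht.1, lt_of_le_of_ne (ht.2.trans hy) htb⟩
  rw [integral_interval_sub_interval_comm hf (hsub hac hcd hdb) (hsub le_rfl hac (hcd.trans hdb))]
  calc |(∫ x in a..c, f x) - ∫ x in b..d, f x|
      ≤ |∫ x in a..c, f x| + |∫ x in d..b, f x| := by
        rw [integral_symm b d, abs_neg]; exact abs_sub _ _
    _ ≤ C * (c - a) + C * (b - d) :=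
        add_le_add (hbound le_rfl hac (hcd.trans hdb)) (hbound (hac.trans hcd) hdb le_rfl)
    _ = C * ((c - a) + (b - d)) := by ring

theorem intervalIntegrable_of_continuousOn_Ioo_of_abs_le {f : ℝ → ℝ} {a b C : ℝ} (hab : a ≤ b)
    (hf : ContinuousOn f (Ioo a b)) (hC : ∀ x ∈ Ioo a b, |f x| ≤ C) :
    IntervalIntegrable f volume a b :=
  (intervalIntegrable_iff_integrableOn_Ioo_of_le hab).2
    ⟨hf.aestronglyMeasurable measurableSet_Ioo, .restrict_of_bounded (C := C) measure_Ioo_lt_top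
      ((ae_restrict_iff' measurableSet_Ioo).2 <| Eventually.of_forall hC)⟩

theorem Function.Periodic.tendsto_intervalIntegral_comp_nat_mul {ψ : ℝ → ℝ} {T : ℝ}
    (hper : Periodic ψ T) (hT : 0 < T) (hψ : Continuous ψ) (a b : ℝ) :
    Tendsto (fun n : ℕ => ∫ u in a..b, ψ (n * u)) atTop (𝓝 ((b - a) * ⨍ θ in 0..T, ψ θ)) := by
  set m := ⨍ θ in 0..T, ψ θ with hm
  set Φ : ℝ → ℝ := fun t => ∫ θ in 0..t, (ψ θ - m)
  have hint : ∀ c d : ℝ, IntervalIntegrable (fun θ => ψ θ - m) volume c d :=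
    fun c d => (hψ.sub continuous_const).intervalIntegrable c d
  -- `Φ` is periodic because `ψ - m` has mean zero, hence bounded.
  have hΦper : Periodic Φ T := fun t => by
    have hmean : ∫ θ in 0..T, (ψ θ - m) = 0 := by
      rw [integral_sub (hψ.intervalIntegrable _ _) intervalIntegrable_const,
        intervalIntegral.integral_const, smul_eq_mul, hm, interval_average_eq, smul_eq_mul,
        sub_zero, mul_inv_cancel_left₀ hT.ne', sub_self]
    have hper' : Periodic (fun θ => ψ θ - m) T := fun θ => by simp only [hper θ]
    simp only [Φ, hper'.intervalIntegral_add_eq_add 0 t hint, zero_add, hmean, add_zero]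
  obtain ⟨C, hC⟩ := (Metric.isBounded_iff_subset_closedBall 0).1
    (hΦper.isBounded_of_continuous hT.ne' (continuous_primitive hint 0))
  have hkey : ∀ n : ℕ, n ≠ 0 →
      ∫ u in a..b, ψ (n * u) = (n : ℝ)⁻¹ * (Φ (n * b) - Φ (n * a)) + (b - a) * m := by
    intro n hn
    have hn' : (n : ℝ) ≠ 0 := Nat.cast_ne_zero.2 hn
    rw [integral_comp_mul_left _ hn', smul_eq_mul, integral_interval_sub_left (hint _ _) (hint _ _),
      integral_sub (hψ.intervalIntegrable _ _) intervalIntegrable_const,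
      intervalIntegral.integral_const, smul_eq_mul]
    field_simp
    ring
  have hbdd : IsBoundedUnder (· ≤ ·) atTop fun n : ℕ => ‖Φ (n * b) - Φ (n * a)‖ :=
    isBoundedUnder_of ⟨C + C, fun n => (norm_sub_le _ _).trans <| add_le_add
      (mem_closedBall_zero_iff.1 (hC ⟨_, rfl⟩)) (mem_closedBall_zero_iff.1 (hC ⟨_, rfl⟩))⟩
  have hlim := ((tendsto_inv_atTop_zero.comp tendsto_natCast_atTop_atTop).zero_mul_isBoundedUnder_le
    hbdd).add_const ((b - a) * m)
  rw [zero_add] at hlim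
  exact hlim.congr' ((eventually_ne_atTop 0).mono fun n hn => (hkey n hn).symm)

theorem Function.Periodic.intervalAverage_add_eq {E : Type*} [NormedAddCommGroup E]
    [NormedSpace ℝ E] {ψ : ℝ → E} {T : ℝ} (hψ : Periodic ψ T)
    (t s : ℝ) : ⨍ x in t..t + T, ψ x = ⨍ x in s..s + T, ψ x := by
  simp only [interval_average_eq, add_sub_cancel_left, hψ.intervalIntegral_add_eq t s]

theorem exists_forall_dist_lt_of_continuousOn_of_periodic {h : ℝ → ℝ → ℝ} {K : Set ℝ} {T : ℝ}
    (hK : IsCompact K) (hT : 0 < T) (hh : ContinuousOn (uncurry h) (K ×ˢ univ))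
    (hper : ∀ u, Periodic (h u) T) {ε : ℝ} (hε : 0 < ε) :
    ∃ δ > 0, ∀ u ∈ K, ∀ v ∈ K, dist u v < δ → ∀ θ, dist (h u θ) (h v θ) < ε := by
  obtain ⟨δ, hδ, hunif⟩ := Metric.uniformContinuousOn_iff.1
    ((hK.prod isCompact_Icc).uniformContinuousOn_of_continuous
      (hh.mono (prod_mono_right (subset_univ (Icc 0 T))))) ε hε
  refine ⟨δ, hδ, fun u hu v hv huv θ => ?_⟩
  have hθ := toIcoMod_mem_Ico hT 0 θ
  rw [zero_add] at hθ
  have hred : ∀ w, h w θ = h w (toIcoMod hT 0 θ) := fun w =>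
    ((hper w).sub_zsmul_eq (toIcoDiv hT 0 θ)).symm
  rw [hred u, hred v]
  exact hunif (u, _) ⟨hu, Ico_subset_Icc_self hθ⟩ (v, _) ⟨hv, Ico_subset_Icc_self hθ⟩
    (by simpa [Prod.dist_eq] using huv)

theorem ContinuousOn.intervalAverage {X : Type*} [TopologicalSpace X] {h : X → ℝ → ℝ}
    {s : Set X} (hh : ContinuousOn (uncurry h) (s ×ˢ univ)) (a b : ℝ) :
    ContinuousOn (fun x => ⨍ θ in a..b, h x θ) s := by
  rw [continuousOn_iff_continuous_domRestrict]
  simp only [domRestrict_def, interval_average_eq]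
  refine (continuous_parametric_intervalIntegral_of_continuous' (μ := volume)
    (f := fun (x : s) θ => h x θ) ?_ a b).const_smul (b - a)⁻¹
  exact hh.comp_continuous (continuous_subtype_val.prodMap continuous_id)
    fun p : s × ℝ => ⟨p.1.2, trivial⟩

theorem ContinuousOn.uncurry_comp_const_mul {h : ℝ → ℝ → ℝ} {s : Set ℝ}
    (hh : ContinuousOn (uncurry h) (s ×ˢ univ)) (c : ℝ) :
    ContinuousOn (fun u => h u (c * u)) s :=
  hh.comp (continuousOn_id.prodMk (continuous_const_mul c).continuousOn) fun _ hu => ⟨hu, trivial⟩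

theorem exists_partition_Icc {a b δ : ℝ} (hab : a ≤ b) (hδ : 0 < δ) :
    ∃ (N : ℕ) (u : ℕ → ℝ), Monotone u ∧ u 0 = a ∧ u N = b ∧
      ∀ j < N, Icc (u j) (u (j + 1)) ⊆ Icc a b ∧ ∀ x ∈ Icc (u j) (u (j + 1)), dist x (u j) < δ := by
  obtain ⟨N, hN⟩ := exists_nat_gt ((b - a) / δ)
  have hN0 : (0 : ℝ) < N := lt_of_le_of_lt (div_nonneg (sub_nonneg.2 hab) hδ.le) hN
  have hstep : 0 ≤ (b - a) / N := div_nonneg (sub_nonneg.2 hab) hN0.le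
  have hδ' : (b - a) / N < δ := by rwa [div_lt_iff₀ hN0, mul_comm, ← div_lt_iff₀ hδ]
  refine ⟨N, fun j => a + j * ((b - a) / N), fun i j hij => ?_, by simp, ?_,
    fun j hj => ⟨?_, fun x hx => ?_⟩⟩
  · dsimp only; gcongr
  · dsimp only; field_simp; ring
  · have hj : (j : ℝ) + 1 ≤ N := by exact_mod_cast hj
    refine Icc_subset_Icc (by dsimp only; nlinarith) ?_
    dsimp only
    push_cast
    calc a + (j + 1) * ((b - a) / N) ≤ a + N * ((b - a) / N) := by gcongr
      _ = b := by field_simp; ring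
  · obtain ⟨hx1, hx2⟩ := hx
    push_cast at hx1 hx2
    rw [dist_eq, abs_of_nonneg (sub_nonneg.2 hx1)]
    linarith

theorem tendsto_intervalIntegral_comp_nat_mul_of_continuousOn_Icc {h : ℝ → ℝ → ℝ} {T a b : ℝ}
    (hab : a ≤ b) (hT : 0 < T) (hh : ContinuousOn (uncurry h) (Icc a b ×ˢ univ))
    (hper : ∀ u, Periodic (h u) T) :
    Tendsto (fun n : ℕ => ∫ u in a..b, h u (n * u)) atTop
      (𝓝 (∫ u in a..b, ⨍ θ in 0..T, h u θ)) := by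
  have hslice : ∀ u ∈ Icc a b, Continuous (h u) := fun u hu =>
    continuousOn_univ.1 (hh.uncurry_left u hu)
  refine tendsto_of_forall_approx fun η hη => ?_
  set ε := η / (b - a + 1)
  have hε : 0 < ε := div_pos hη (by linarith)
  have hεη : ε * (b - a) ≤ η := by
    rw [div_mul_eq_mul_div, div_le_iff₀ (by linarith)]; nlinarith
  obtain ⟨δ, hδ, hclose⟩ :=
    exists_forall_dist_lt_of_continuousOn_of_periodic isCompact_Icc hT hh hper hε
  obtain ⟨N, u, hmono, hu0, huN, hpart⟩ := exists_partition_Icc hab hδ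
  -- On the `j`-th piece of the partition, freeze the first argument of `h` at `u j`.
  have hnode : ∀ j < N, u j ∈ Icc a b := fun j hj => (hpart j hj).1 ⟨le_rfl, hmono j.le_succ⟩
  have hfreeze : ∀ j < N, ∀ x ∈ Ioc (u j) (u (j + 1)), ∀ θ, |h x θ - h (u j) θ| ≤ ε :=
    fun j hj x hx θ => (hclose x ((hpart j hj).1 (Ioc_subset_Icc_self hx)) (u j) (hnode j hj)
      ((hpart j hj).2 x (Ioc_subset_Icc_self hx)) θ).le
  have hint : ∀ {f : ℝ → ℝ}, ContinuousOn f (Icc a b) → ∀ j < N,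
      IntervalIntegrable f volume (u j) (u (j + 1)) := fun hf j hj =>
    (hf.mono (by rw [uIcc_of_le (hmono j.le_succ)]; exact (hpart j hj).1)).intervalIntegrable
  refine ⟨fun n => ∑ j ∈ Finset.range N, ∫ x in u j..u (j + 1), h (u j) (n * x),
    ∑ j ∈ Finset.range N, ∫ _ in u j..u (j + 1), ⨍ θ in 0..T, h (u j) θ, ?_,
    Eventually.of_forall fun n => ?_, ?_⟩
  · refine tendsto_finsetSum _ fun j hj => ?_
    rw [intervalIntegral.integral_const, smul_eq_mul]
    exact (hper _).tendsto_intervalIntegral_comp_nat_mul hT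
      (hslice _ (hnode j (Finset.mem_range.1 hj))) _ _
  · rw [dist_eq, ← hu0, ← huN]
    refine (abs_intervalIntegral_sub_sum_le hmono (hint (hh.uncurry_comp_const_mul n))
      (fun j hj => ((hslice _ (hnode j hj)).comp (continuous_const_mul _)).intervalIntegrable _ _)
      fun j hj x hx => hfreeze j hj x hx _).trans (by rwa [hu0, huN])
  · rw [dist_comm, dist_eq, ← hu0, ← huN]
    refine (abs_intervalIntegral_sub_sum_le hmono (hint (hh.intervalAverage 0 T))
      (fun _ _ => intervalIntegrable_const) fun j hj x hx => ?_).trans (by rwa [hu0, huN])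
    exact abs_intervalAverage_sub_le hT
      ((hslice x ((hpart j hj).1 (Ioc_subset_Icc_self hx))).intervalIntegrable _ _)
      ((hslice _ (hnode j hj)).intervalIntegrable _ _) fun θ _ => hfreeze j hj x hx θ

theorem tendsto_intervalIntegral_comp_nat_mul_of_continuousOn_Ioo {h : ℝ → ℝ → ℝ} {T a b C : ℝ}
    (hab : a < b) (hT : 0 < T) (hh : ContinuousOn (uncurry h) (Ioo a b ×ˢ univ))
    (hper : ∀ u, Periodic (h u) T) (hC : ∀ u ∈ Ioo a b, ∀ θ, |h u θ| ≤ C) :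
    Tendsto (fun n : ℕ => ∫ u in a..b, h u (n * u)) atTop
      (𝓝 (∫ u in a..b, ⨍ θ in 0..T, h u θ)) := by
  have hA : ∀ u ∈ Ioo a b, |⨍ θ in 0..T, h u θ| ≤ C := fun u hu => by
    simpa using abs_intervalAverage_sub_le (g := 0) hT
      ((continuousOn_univ.1 (hh.uncurry_left u hu)).intervalIntegrable _ _)
      intervalIntegrable_const fun θ _ => by simpa using hC u hu θ
  refine tendsto_of_forall_approx fun ε hε => ?_
  -- On `[a + δ, b - δ]` the compact case applies; the two ends cost at most `2 C δ`.
  obtain ⟨δ, hδ, hδab, hCδ⟩ : ∃ δ > 0, 2 * δ < b - a ∧ C * (2 * δ) ≤ ε := by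
    refine ⟨min ((b - a) / 4) (ε / (2 * (|C| + 1))), by positivity,
      by linarith [min_le_left ((b - a) / 4) (ε / (2 * (|C| + 1)))], ?_⟩
    calc C * (2 * min ((b - a) / 4) (ε / (2 * (|C| + 1))))
        ≤ (|C| + 1) * (2 * (ε / (2 * (|C| + 1)))) :=
          mul_le_mul (by linarith [le_abs_self C]) (by gcongr; exact min_le_right _ _)
            (by positivity) (by positivity)
      _ = ε := by field_simp
  have hsub : Icc (a + δ) (b - δ) ⊆ Ioo a b := Icc_subset_Ioo (by linarith) (by linarith)
  refine ⟨fun n => ∫ u in (a + δ)..(b - δ), h u (n * u),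
    ∫ u in (a + δ)..(b - δ), ⨍ θ in 0..T, h u θ,
    tendsto_intervalIntegral_comp_nat_mul_of_continuousOn_Icc (by linarith) hT
      (hh.mono (prod_mono_left hsub)) hper, Eventually.of_forall fun n => ?_, ?_⟩
  · rw [dist_eq]
    refine (abs_intervalIntegral_sub_intervalIntegral_le (by linarith) (by linarith) (by linarith)
      (intervalIntegrable_of_continuousOn_Ioo_of_abs_le hab.le (hh.uncurry_comp_const_mul n)
        fun u hu => hC u hu _)
      fun u hu => hC u hu _).trans ?_
    linarith
  · rw [dist_comm, dist_eq]
    refine (abs_intervalIntegral_sub_intervalIntegral_le (by linarith) (by linarith) (by linarith)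
      (intervalIntegrable_of_continuousOn_Ioo_of_abs_le hab.le (hh.intervalAverage 0 T) hA)
      hA).trans ?_
    linarith

theorem integral_Ioo_comp_sqrt_neg_two_mul_log {E : Type*} [NormedAddCommGroup E]
    [NormedSpace ℝ E] (φ : ℝ → E) :
    ∫ u in Ioo 0 1, φ √(-2 * log u) = ∫ r in Ioi 0, (r * exp (-r ^ 2 / 2)) • φ r := by
  have himage : (fun r : ℝ => exp (-r ^ 2 / 2)) '' Ioi 0 = Ioo 0 1 := by
    ext u
    constructor
    · rintro ⟨r, hr, rfl⟩
      exact ⟨exp_pos _, exp_lt_one_iff.2 (by nlinarith [mem_Ioi.1 hr])⟩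
    · rintro ⟨hu0, hu1⟩
      have hlog := log_neg hu0 hu1
      refine ⟨√(-2 * log u), sqrt_pos.2 (by linarith), ?_⟩
      dsimp only
      rw [sq_sqrt (by linarith), show -(-2 * log u) / 2 = log u by ring, exp_log hu0]
  have hderiv : ∀ r ∈ Ioi (0 : ℝ),
      HasDerivWithinAt (fun r : ℝ => exp (-r ^ 2 / 2)) (exp (-r ^ 2 / 2) * (-r)) (Ioi 0) r :=
    fun r _ => (((hasDerivAt_pow 2 r).fun_neg.div_const 2).exp.congr_deriv
      (by push_cast; ring)).hasDerivWithinAt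
  have hinj : InjOn (fun r : ℝ => exp (-r ^ 2 / 2)) (Ioi 0) := fun x hx y hy hxy => by
    simp only [exp_eq_exp] at hxy
    nlinarith [mem_Ioi.1 hx, mem_Ioi.1 hy]
  rw [← himage, integral_image_eq_integral_abs_deriv_smul measurableSet_Ioi hderiv hinj]
  refine setIntegral_congr_fun measurableSet_Ioi fun r (hr : 0 < r) => ?_
  rw [log_exp, show -2 * (-r ^ 2 / 2) = r ^ 2 by ring, sqrt_sq hr.le, abs_mul, abs_neg,
    abs_of_pos (exp_pos _), abs_of_pos hr, mul_comm]

theorem gaussianPDFReal_zero_one (x : ℝ) :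
    gaussianPDFReal 0 1 x = (√(2 * π))⁻¹ * exp (-x ^ 2 / 2) := by
  simp [gaussianPDFReal]

theorem withDensity_ofReal_gaussian_eq_gaussianReal :
    volume.withDensity (fun t : ℝ => ENNReal.ofReal ((√(2 * π))⁻¹ * exp (-t ^ 2 / 2)))
      = gaussianReal 0 1 := by
  rw [gaussianReal_of_var_ne_zero _ one_ne_zero]
  congr 1
  funext t
  rw [gaussianPDF, gaussianPDFReal_zero_one]

theorem integrable_mul_exp_mul_comp_mul_sin (g : ℝ →ᵇ ℝ) :
    Integrable (fun p : ℝ × ℝ => p.1 * exp (-p.1 ^ 2 / 2) * g (p.1 * sin p.2))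
      ((volume.restrict (Ioi 0)).prod (volume.restrict (Ioo (-π) π))) := by
  have hr : Integrable (fun r : ℝ => |r| * exp (-r ^ 2 / 2)) (volume.restrict (Ioi 0)) := by
    have := (integrable_mul_exp_neg_mul_sq (b := 2⁻¹) (by norm_num)).norm.restrict (s := Ioi 0)
    refine this.congr (Eventually.of_forall fun r => ?_)
    simp only [norm_mul, norm_eq_abs, abs_of_pos (exp_pos _)]
    ring_nf
  refine ((hr.mul_prod (integrable_const ‖g‖ : Integrable _ (volume.restrict (Ioo (-π) π))))).mono'
    (by fun_prop) (Eventually.of_forall fun p => ?_)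
  rw [norm_mul, norm_mul, norm_eq_abs, norm_of_nonneg (exp_pos _).le]
  exact mul_le_mul_of_nonneg_left (g.norm_coe_le_norm _) (by positivity)

theorem integral_Ioi_mul_exp_mul_intervalAverage (g : ℝ →ᵇ ℝ) :
    ∫ r in Ioi 0, r * exp (-r ^ 2 / 2) * ⨍ θ in -π..π, g (r * sin θ)
      = ∫ y, g y ∂gaussianReal 0 1 := by
  -- `F` is the standard Gaussian density on `ℝ²` times `g y`; integrate it in both coordinates.
  set F : ℝ × ℝ → ℝ := fun p => gaussianPDFReal 0 1 p.1 * (gaussianPDFReal 0 1 p.2 * g p.2)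
  have hF : ∫ p, F p = ∫ y, g y ∂gaussianReal 0 1 := by
    rw [Measure.volume_eq_prod, integral_gaussianReal_eq_integral_smul one_ne_zero]
    refine (integral_prod_mul (gaussianPDFReal 0 1) fun y => gaussianPDFReal 0 1 y * g y).trans ?_
    rw [integral_gaussianPDFReal_eq_one 0 one_ne_zero, one_mul]
    rfl
  have hpolar : ∀ p : ℝ × ℝ, p.1 • F (polarCoord.symm p)
      = (2 * π)⁻¹ * (p.1 * exp (-p.1 ^ 2 / 2) * g (p.1 * sin p.2)) := fun p => by
    have hsq : (√(2 * π))⁻¹ * (√(2 * π))⁻¹ = (2 * π)⁻¹ := by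
      rw [← mul_inv, mul_self_sqrt (by positivity)]
    have hexp : exp (-(p.1 * cos p.2) ^ 2 / 2) * exp (-(p.1 * sin p.2) ^ 2 / 2)
        = exp (-p.1 ^ 2 / 2) := by
      rw [← exp_add]; congr 1; linear_combination (-p.1 ^ 2 / 2) * cos_sq_add_sin_sq p.2
    simp only [F, polarCoord_symm_apply, gaussianPDFReal_zero_one, smul_eq_mul]
    rw [← hsq, ← hexp]
    ring
  have hprod : (volume : Measure (ℝ × ℝ)).restrict (Ioi 0 ×ˢ Ioo (-π) π)
      = (volume.restrict (Ioi 0)).prod (volume.restrict (Ioo (-π) π)) := by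
    rw [Measure.volume_eq_prod, Measure.prod_restrict]
  rw [← hF, ← integral_comp_polarCoord_symm, polarCoord_target, hprod]
  simp only [hpolar]
  rw [MeasureTheory.integral_const_mul, integral_prod _ (integrable_mul_exp_mul_comp_mul_sin g),
    ← MeasureTheory.integral_const_mul]
  refine integral_congr_ae (Eventually.of_forall fun r => ?_)
  dsimp only
  rw [MeasureTheory.integral_const_mul, interval_average_eq, integral_of_le (by linarith [pi_pos]),
    integral_Ioc_eq_integral_Ioo, smul_eq_mul, sub_neg_eq_add, two_mul]
  ring

theorem integral_intervalAverage_comp_sqrt_neg_two_mul_log (g : ℝ →ᵇ ℝ) :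
    ∫ u in 0..1, ⨍ θ in 0..2 * π, g (√(-2 * log u) * sin θ) = ∫ y, g y ∂gaussianReal 0 1 := by
  have hshift : ∀ r, ⨍ θ in 0..2 * π, g (r * sin θ) = ⨍ θ in -π..π, g (r * sin θ) := fun r => by
    have hper : Periodic (fun θ => g (r * sin θ)) (2 * π) := fun θ => by
      simp only [sin_periodic θ]
    simpa only [zero_add, show -π + 2 * π = π by ring] using hper.intervalAverage_add_eq 0 (-π)
  rw [integral_of_le zero_le_one, integral_Ioc_eq_integral_Ioo,
    integral_Ioo_comp_sqrt_neg_two_mul_log fun r => ⨍ θ in 0..2 * π, g (r * sin θ),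
    ← integral_Ioi_mul_exp_mul_intervalAverage]
  simp only [hshift, smul_eq_mul]

/-- The laws of `V_n = √(−2 ln U) sin(n U)` converge weakly to the standard normal
distribution, i.e. the measure with density `t ↦ (1/√(2π)) e^{−t²/2}`. -/
theorem tendsto_law_gaussian :
    IsProbabilityMeasure
      (volume.withDensity
        (fun t : ℝ => ENNReal.ofReal ((Real.sqrt (2 * Real.pi))⁻¹ * Real.exp (-t ^ 2 / 2)))) ∧
    ∀ g : BoundedContinuousFunction ℝ ℝ,
      Filter.Tendsto
        (fun n : ℕ =>
          ∫ x : ℝ, g x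
            ∂(uniform01.map (fun u => Real.sqrt (-2 * Real.log u) * Real.sin (n * u))))
        Filter.atTop
        (nhds (∫ x : ℝ, g x
          ∂(volume.withDensity
            (fun t : ℝ =>
              ENNReal.ofReal ((Real.sqrt (2 * Real.pi))⁻¹ * Real.exp (-t ^ 2 / 2)))))) := by
  rw [withDensity_ofReal_gaussian_eq_gaussianReal]
  refine ⟨inferInstance, fun g => ?_⟩
  have hmap : ∀ n : ℕ, ∫ x, g x ∂(uniform01.map fun u => √(-2 * log u) * sin (n * u))
      = ∫ u in 0..1, g (√(-2 * log u) * sin (n * u)) := fun n => by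
    rw [integral_map (by fun_prop) g.continuous.aestronglyMeasurable, uniform01,
      integral_of_le zero_le_one, integral_Ioc_eq_integral_Ioo]
  have hlog : ContinuousOn (fun p : ℝ × ℝ => log p.1) (Ioo 0 1 ×ˢ univ) :=
    continuousOn_fst.log fun p hp => hp.1.1.ne'
  simp only [hmap, ← integral_intervalAverage_comp_sqrt_neg_two_mul_log]
  exact tendsto_intervalIntegral_comp_nat_mul_of_continuousOn_Ioo zero_lt_one two_pi_pos
    (g.continuous.comp_continuousOn (by fun_prop)) (fun u θ => by simp only [sin_periodic θ])
    fun u _ θ => g.norm_coe_le_norm _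
end
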